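/- arXiv:2505.16468 — 2 statements merged into one kernel-verified Lean document; each statement's English description precedes it below -/
import Mathlib

section
/- Abstract modified interpolation operator (mechanism of Theorem 4.1): Let H be a real inner product space, and let B and D be finite-dimensional subspaces of H satisfying the inf-sup condition: there is c > 0 such that for every q ∈ D, sup{⟨v, q⟩ : v ∈ B, ‖v‖ ≤ 1} ≥ c‖q‖. Then for every f ∈ H and every w ∈ H (an arbitrary interpolant of f), there exists j ∈ H with j − w ∈ B such that ⟨f − j, q⟩ = 0 for all q ∈ D (orthogonality) and ‖f − j‖ ≤ (1 + 1/c)‖f − w‖ (approximation property). -/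
/-!
The inf-sup condition says that the orthogonal projection `P_B` is bounded below on `D`:
`c ‖q‖ ≤ ‖P_B q‖`. Since `⟪P_D P_B p, p⟫ = ‖P_B p‖ ^ 2`, the compression `P_D P_B` of `P_B` to the
finite-dimensional space `D` is injective, hence surjective. Solving `P_D P_B p = P_D (f - w)` and
putting `b = P_B p` gives `b ∈ B` with `⟪b, q⟫ = ⟪f - w, q⟫` on `D` and
`‖b‖ ^ 2 = ⟪f - w, p⟫ ≤ ‖f - w‖ ‖b‖ / c`; then `j = w + b`.
-/

open RealInnerProductSpace

namespace Submodule

variable {H : Type*} [NormedAddCommGroup H] [InnerProductSpace ℝ H]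

section Projection

variable (B : Submodule ℝ H) [B.HasOrthogonalProjection]

theorem inner_starProjection_right_of_mem {v : H} (hv : v ∈ B) (q : H) :
    ⟪v, B.starProjection q⟫ = ⟪v, q⟫ := by
  rw [← inner_starProjection_left_eq_right, starProjection_eq_self_iff.mpr hv]

theorem inner_starProjection_left_eq_norm_sq (p : H) :
    ⟪B.starProjection p, p⟫ = ‖B.starProjection p‖ ^ 2 := by
  rw [← B.inner_starProjection_right_of_mem (B.starProjection_apply_mem p),
    real_inner_self_eq_norm_sq]

theorem sSup_inner_unitBall_le_norm_starProjection (q : H) :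
    sSup {r : ℝ | ∃ v ∈ B, ‖v‖ ≤ 1 ∧ r = ⟪v, q⟫} ≤ ‖B.starProjection q‖ := by
  refine Real.sSup_le ?_ (norm_nonneg _)
  rintro _ ⟨v, hvB, hv1, rfl⟩
  calc ⟪v, q⟫ = ⟪v, B.starProjection q⟫ := (B.inner_starProjection_right_of_mem hvB q).symm
    _ ≤ ‖v‖ * ‖B.starProjection q‖ := real_inner_le_norm _ _
    _ ≤ ‖B.starProjection q‖ := mul_le_of_le_one_left (norm_nonneg _) hv1

end Projection

section Compression

variable (B D : Submodule ℝ H) [B.HasOrthogonalProjection] [D.HasOrthogonalProjection]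

noncomputable def compressStarProjection : D →ₗ[ℝ] D :=
  D.orthogonalProjectionOnto.toLinearMap ∘ₗ B.starProjection.toLinearMap ∘ₗ D.subtype

theorem inner_compressStarProjection (p q : D) :
    ⟪(compressStarProjection B D p : H), q⟫ = ⟪B.starProjection p, q⟫ :=
  D.inner_orthogonalProjectionOnto_eq_of_mem_right q _

variable {B D} {c : ℝ}

theorem injective_compressStarProjection (hc : 0 < c)
    (hBD : ∀ q ∈ D, c * ‖q‖ ≤ ‖B.starProjection q‖) :
    Function.Injective (compressStarProjection B D) := by
  rw [← LinearMap.ker_eq_bot, LinearMap.ker_eq_bot']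
  intro p hp
  have hPp : B.starProjection p = 0 := by
    have h := B.inner_starProjection_left_eq_norm_sq p
    rw [← inner_compressStarProjection, hp] at h
    simpa using h.symm
  have hcp : c * ‖(p : H)‖ ≤ 0 := by simpa [hPp] using hBD p p.2
  exact Subtype.ext (norm_le_zero_iff.mp (nonpos_of_mul_nonpos_right hcp hc))

end Compression

variable {B : Submodule ℝ H} [B.HasOrthogonalProjection] {c : ℝ}

theorem exists_starProjection_inner_eq {D : Submodule ℝ H} [FiniteDimensional ℝ D] (hc : 0 < c)
    (hBD : ∀ q ∈ D, c * ‖q‖ ≤ ‖B.starProjection q‖) (u : H) :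
    ∃ p ∈ D, ∀ q ∈ D, ⟪B.starProjection p, q⟫ = ⟪u, q⟫ := by
  obtain ⟨p, hp⟩ := LinearMap.injective_iff_surjective.mp
    (injective_compressStarProjection hc hBD) (D.orthogonalProjectionOnto u)
  refine ⟨p, p.2, fun q hq => ?_⟩
  rw [← inner_compressStarProjection B D p ⟨q, hq⟩, hp]
  exact D.inner_orthogonalProjectionOnto_eq_of_mem_right ⟨q, hq⟩ u

theorem norm_starProjection_le_div (hc : 0 < c) {p u : H} (hcp : c * ‖p‖ ≤ ‖B.starProjection p‖)
    (hpu : ⟪B.starProjection p, p⟫ = ⟪u, p⟫) :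
    ‖B.starProjection p‖ ≤ ‖u‖ / c := by
  set b := B.starProjection p
  have hsq : ‖b‖ * ‖b‖ ≤ ‖u‖ / c * ‖b‖ :=
    calc ‖b‖ * ‖b‖ = ⟪u, p⟫ := by rw [← sq, ← hpu, B.inner_starProjection_left_eq_norm_sq]
      _ ≤ ‖u‖ * ‖p‖ := real_inner_le_norm u p
      _ ≤ ‖u‖ * (‖b‖ / c) := by gcongr; rwa [le_div_iff₀' hc]
      _ = ‖u‖ / c * ‖b‖ := by ring
  rcases (norm_nonneg b).eq_or_lt with hb | hb
  · rw [← hb]; positivity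
  · exact le_of_mul_le_mul_right hsq hb

theorem exists_mem_inner_eq_and_norm_le {D : Submodule ℝ H} [FiniteDimensional ℝ D] (hc : 0 < c)
    (hBD : ∀ q ∈ D, c * ‖q‖ ≤ ‖B.starProjection q‖) (u : H) :
    ∃ b ∈ B, (∀ q ∈ D, ⟪b, q⟫ = ⟪u, q⟫) ∧ ‖b‖ ≤ ‖u‖ / c := by
  obtain ⟨p, hpD, hp⟩ := exists_starProjection_inner_eq hc hBD u
  exact ⟨B.starProjection p, B.starProjection_apply_mem p, hp,
    norm_starProjection_le_div hc (hBD p hpD) (hp p hpD)⟩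

end Submodule

/-- **Abstract modified interpolation operator** (mechanism of Theorem 4.1):
let `H` be a real inner product space and `B`, `D` finite-dimensional subspaces
satisfying the inf-sup condition with constant `c > 0`. Then for every `f ∈ H`
and every `w ∈ H` (an arbitrary interpolant of `f`) there is `j ∈ H` with
`j - w ∈ B`, `⟪f - j, q⟫ = 0` for all `q ∈ D` (orthogonality), and
`‖f - j‖ ≤ (1 + 1/c) ‖f - w‖` (approximation property). -/
theorem abstract_modified_interpolation
    {H : Type*} [NormedAddCommGroup H] [InnerProductSpace ℝ H]
    (B D : Submodule ℝ H) [FiniteDimensional ℝ B] [FiniteDimensional ℝ D]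
    (c : ℝ) (hc : 0 < c)
    (hinfsup : ∀ q ∈ D,
      c * ‖q‖ ≤ sSup {r : ℝ | ∃ v ∈ B, ‖v‖ ≤ 1 ∧ r = (inner ℝ v q : ℝ)}) :
    ∀ f w : H, ∃ j : H, j - w ∈ B ∧ (∀ q ∈ D, (inner ℝ (f - j) q : ℝ) = 0) ∧
      ‖f - j‖ ≤ (1 + 1 / c) * ‖f - w‖ := by
  intro f w
  have hBD : ∀ q ∈ D, c * ‖q‖ ≤ ‖B.starProjection q‖ := fun q hq =>
    (hinfsup q hq).trans (B.sSup_inner_unitBall_le_norm_starProjection q)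
  obtain ⟨b, hbB, hb_inner, hb_norm⟩ := B.exists_mem_inner_eq_and_norm_le hc hBD (f - w)
  have hj : f - (w + b) = (f - w) - b := by abel
  refine ⟨w + b, by simpa using hbB, fun q hq => ?_, ?_⟩
  · rw [hj, inner_sub_left, hb_inner q hq, sub_self]
  · calc ‖f - (w + b)‖ ≤ ‖f - w‖ + ‖b‖ := hj ▸ norm_sub_le _ _
      _ ≤ ‖f - w‖ + ‖f - w‖ / c := by gcongr
      _ = (1 + 1 / c) * ‖f - w‖ := by ring
end

section
/- Symmetrization identity for the H(div) advection operator (identity (5.2), div case): Let u, β : ℝ³ → ℝ³ be differentiable at a point x ∈ ℝ³. Then (L^{div}_β u)(x) + ((L^{div}_β)^* u)(x) = −(Dβ(x) + Dβ(x)ᵀ) u(x) + (div β)(x) u(x); that is, β(x) (div u)(x) − curl(β × u)(x) − ∇(β·u)(x) − (curl u)(x) × β(x) = −(Dβ(x) + Dβ(x)ᵀ − (div β)(x) I) u(x). -/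
open Finset

noncomputable section

/-- Points of `ℝ³`. -/
abbrev V3 := Fin 3 → ℝ

/-- Euclidean dot product on `ℝ³`. -/
def dot3 (a b : V3) : ℝ := ∑ i, a i * b i

/-- Cross product on `ℝ³`. -/
def cross3 (a b : V3) : V3 :=
  ![a 1 * b 2 - a 2 * b 1, a 2 * b 0 - a 0 * b 2, a 0 * b 1 - a 1 * b 0]

/-- The `j`-th standard basis vector of `ℝ³`. -/
def e3 (j : Fin 3) : V3 := Pi.single j 1

/-- Partial derivative `∂ⱼ wᵢ (x)` of a vector field `w : ℝ³ → ℝ³`. -/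
def pd (w : V3 → V3) (x : V3) (i j : Fin 3) : ℝ := fderiv ℝ w x (e3 j) i

/-- Divergence `div w = ∂₁w₁ + ∂₂w₂ + ∂₃w₃` of a vector field at a point. -/
def divg (w : V3 → V3) (x : V3) : ℝ := ∑ i, pd w x i i

/-- Curl `(∂₂w₃ − ∂₃w₂, ∂₃w₁ − ∂₁w₃, ∂₁w₂ − ∂₂w₁)` of a vector field at a point
(0-based indices). -/
def curl3 (w : V3 → V3) (x : V3) : V3 :=
  ![pd w x 2 1 - pd w x 1 2, pd w x 0 2 - pd w x 2 0, pd w x 1 0 - pd w x 0 1]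

/-- Gradient `∇f = (∂₁f, ∂₂f, ∂₃f)` of a scalar function at a point. -/
def grad3 (f : V3 → ℝ) (x : V3) : V3 := fun j => fderiv ℝ f x (e3 j)

/-- Jacobian matrix `Dw(x)` with entries `(Dw)ᵢⱼ = ∂ⱼwᵢ`. -/
def jac (w : V3 → V3) (x : V3) : Matrix (Fin 3) (Fin 3) ℝ :=
  Matrix.of fun i j => pd w x i j

/-- The `H(curl)` advection operator `L^curl_β u = ∇(β·u) + (curl u) × β`. -/
def Lcurl (β u : V3 → V3) (x : V3) : V3 :=
  grad3 (fun y => dot3 (β y) (u y)) x + cross3 (curl3 u x) (β x)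

/-- Formal adjoint `(L^curl_β)^* u = −β (div u) + curl(β × u)`. -/
def LcurlAdj (β u : V3 → V3) (x : V3) : V3 :=
  -(divg u x • β x) + curl3 (fun y => cross3 (β y) (u y)) x

/-- The `H(div)` advection operator `L^div_β u = β (div u) − curl(β × u)`. -/
def Ldiv (β u : V3 → V3) (x : V3) : V3 :=
  divg u x • β x - curl3 (fun y => cross3 (β y) (u y)) x

/-- Formal adjoint `(L^div_β)^* u = −∇(β·u) − (curl u) × β`. -/
def LdivAdj (β u : V3 → V3) (x : V3) : V3 :=
  -grad3 (fun y => dot3 (β y) (u y)) x - cross3 (curl3 u x) (β x)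

end

/-!
The product rules for `β × u` and `β · u` give the classical formulas
`curl (β × u) = β div u - u div β + (Dβ) u - (Du) β` and `∇(β · u) = (Dβ)ᵀ u + (Du)ᵀ β`,
while `(curl u) × β = (Du - Duᵀ) β` holds pointwise. Adding up, every term with `Du` cancels.
-/

open Matrix

section ProductRule

variable {𝕜 X E F G : Type*} [NontriviallyNormedField 𝕜] [CompleteSpace 𝕜]
  [NormedAddCommGroup X] [NormedSpace 𝕜 X] [NormedAddCommGroup E] [NormedSpace 𝕜 E]
  [NormedAddCommGroup F] [NormedSpace 𝕜 F] [NormedAddCommGroup G] [NormedSpace 𝕜 G]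
  [FiniteDimensional 𝕜 E] [FiniteDimensional 𝕜 F]

theorem LinearMap.fderiv_of_bilinear_apply (B : E →ₗ[𝕜] F →ₗ[𝕜] G) {f : X → E}
    {g : X → F} {x : X} (hf : DifferentiableAt 𝕜 f x) (hg : DifferentiableAt 𝕜 g x) (v : X) :
    fderiv 𝕜 (fun y => B (f y) (g y)) x v =
      B (fderiv 𝕜 f x v) (g x) + B (f x) (fderiv 𝕜 g x v) := by
  let Bc : E →L[𝕜] F →L[𝕜] G :=
    LinearMap.toContinuousLinearMap
      ((LinearMap.toContinuousLinearMap : (F →ₗ[𝕜] G) ≃ₗ[𝕜] F →L[𝕜] G).toLinearMap ∘ₗ B)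
  change fderiv 𝕜 (fun y => Bc (f y) (g y)) x v = _
  rw [Bc.fderiv_of_bilinear hf hg]
  simp [Bc, add_comm]

end ProductRule

section VectorCalculus

variable {u β : V3 → V3} {x : V3}

theorem fderiv_cross3_apply (hβ : DifferentiableAt ℝ β x) (hu : DifferentiableAt ℝ u x)
    (v : V3) :
    fderiv ℝ (fun y => cross3 (β y) (u y)) x v =
      cross3 (fderiv ℝ β x v) (u x) + cross3 (β x) (fderiv ℝ u x v) :=
  crossProduct.fderiv_of_bilinear_apply hβ hu v

theorem fderiv_dot3_apply (hβ : DifferentiableAt ℝ β x) (hu : DifferentiableAt ℝ u x) (v : V3) :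
    fderiv ℝ (fun y => dot3 (β y) (u y)) x v =
      dot3 (fderiv ℝ β x v) (u x) + dot3 (β x) (fderiv ℝ u x v) :=
  (dotProductBilin ℝ ℝ).fderiv_of_bilinear_apply hβ hu v

theorem curl3_cross3 (hβ : DifferentiableAt ℝ β x) (hu : DifferentiableAt ℝ u x) :
    curl3 (fun y => cross3 (β y) (u y)) x =
      divg u x • β x - divg β x • u x + jac β x *ᵥ u x - jac u x *ᵥ β x := by
  ext i
  simp only [curl3, pd, fderiv_cross3_apply hβ hu]
  simp only [cross3, divg, pd, jac, mulVec, dotProduct,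
    of_apply, Fin.sum_univ_three, Pi.add_apply, Pi.sub_apply, Pi.smul_apply, smul_eq_mul]
  fin_cases i <;> simp only [Fin.zero_eta, Fin.mk_one, Fin.reduceFinMk, Fin.isValue,
    Matrix.cons_val, cons_val_zero, cons_val_one] <;> ring

theorem grad3_dot3 (hβ : DifferentiableAt ℝ β x) (hu : DifferentiableAt ℝ u x) :
    grad3 (fun y => dot3 (β y) (u y)) x = (jac β x)ᵀ *ᵥ u x + (jac u x)ᵀ *ᵥ β x := by
  ext j
  rw [grad3, fderiv_dot3_apply hβ hu]
  simp [dot3, jac, pd, mulVec, dotProduct, mul_comm]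

theorem cross3_curl3 (u : V3 → V3) (x b : V3) :
    cross3 (curl3 u x) b = (jac u x - (jac u x)ᵀ) *ᵥ b := by
  ext i
  simp only [cross3, curl3, jac, mulVec, dotProduct, Matrix.sub_apply, of_apply, transpose_apply,
    Fin.sum_univ_three]
  fin_cases i <;> simp only [Fin.zero_eta, Fin.mk_one, Fin.reduceFinMk, Fin.isValue,
    Matrix.cons_val, cons_val_zero, cons_val_one] <;> ring

end VectorCalculus

/-- **Symmetrization identity for the `H(div)` advection operator** (identity
(5.2), div case): for `u, β` differentiable at `x`,
`L^div_β u + (L^div_β)^* u = −(Dβ + Dβᵀ) u + (div β) u` at `x`. -/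
theorem div_symmetrization_identity
    (u β : V3 → V3) (x : V3)
    (hu : DifferentiableAt ℝ u x) (hβ : DifferentiableAt ℝ β x) :
    Ldiv β u x + LdivAdj β u x =
      -((jac β x + (jac β x).transpose).mulVec (u x)) + divg β x • u x := by
  rw [Ldiv, LdivAdj, curl3_cross3 hβ hu, grad3_dot3 hβ hu, cross3_curl3, add_mulVec, sub_mulVec]
  abel
end
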